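/- arXiv:2404.05750 — 2 statements merged into one kernel-verified Lean document; each statement's English description precedes it below -/
import Mathlib

section
/- For every prime p ≥ 1, the set H_p = {0,1,...,p-1} with multivalued sum a+b = H_p if a = b with a,b ≠ 0; a+b = {a,b} if a ≠ b and a,b ≠ 0; a+0 = {a}; 0+b = {b}; and product a·b = (ab mod p), is a hyperfield in which -a = a for all a. -/
/-- A multiring structure (multivalued addition) on a carrier `R`. -/
structure MulRingOps (R : Type*) where
  add : R → R → Set R
  mul : R → R → R
  neg : R → R
  zero : R
  one : R

namespace MulRingOps

variable {R : Type*}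

/-- The multiring axioms. -/
structure IsMulRing (S : MulRingOps R) : Prop where
  add_nonempty : ∀ a b, (S.add a b).Nonempty
  add_comm : ∀ a b, S.add a b = S.add b a
  rev_left : ∀ {x y z}, z ∈ S.add x y → x ∈ S.add z (S.neg y)
  rev_right : ∀ {x y z}, z ∈ S.add x y → y ∈ S.add (S.neg x) z
  zero_add : ∀ x y, y ∈ S.add S.zero x ↔ x = y
  add_assoc : ∀ x y z : R,
    (⋃ w ∈ S.add y z, S.add x w) = (⋃ t ∈ S.add x y, S.add t z)
  mul_comm : ∀ a b, S.mul a b = S.mul b a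
  mul_assoc : ∀ a b c, S.mul (S.mul a b) c = S.mul a (S.mul b c)
  one_mul : ∀ a, S.mul S.one a = a
  mul_zero : ∀ a, S.mul a S.zero = S.zero
  distrib : ∀ {a b c : R} (d : R), c ∈ S.add a b →
    S.mul c d ∈ S.add (S.mul a d) (S.mul b d)

/-- A hyperfield: a multiring with `0 ≠ 1` in which every nonzero element is invertible. -/
structure IsHyperfield (S : MulRingOps R) extends IsMulRing S : Prop where
  zero_ne_one : S.zero ≠ S.one
  exists_inv : ∀ a, a ≠ S.zero → ∃ b, S.mul a b = S.one

/-- A hyperfield is hyperbolic when `1 - 1` is everything. -/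
def IsHyperbolic (S : MulRingOps R) : Prop :=
  S.add S.one (S.neg S.one) = Set.univ

/-- Morphisms of multirings. -/
def IsHom {A B : Type*} (S : MulRingOps A) (T : MulRingOps B) (f : A → B) : Prop :=
  (∀ {a b c}, c ∈ S.add a b → f c ∈ T.add (f a) (f b)) ∧
  (∀ a, f (S.neg a) = T.neg (f a)) ∧
  f S.zero = T.zero ∧
  (∀ a b, f (S.mul a b) = T.mul (f a) (f b)) ∧
  f S.one = T.one

end MulRingOps

open Classical in
/-- The multivalued sum on `H_p = {0,...,p-1}` (realized as `ZMod p`):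
`a+b = H_p` if `a = b ≠ 0`, `a+b = {a,b}` if `a ≠ b`, `a,b ≠ 0`, and `a+0 = {a}`, `0+b = {b}`. -/
noncomputable def hAdd (p : ℕ) (a b : ZMod p) : Set (ZMod p) :=
  if a = 0 then {b} else if b = 0 then {a} else if a = b then Set.univ else {a, b}

/-- The operations of the H-hyperfield `H_p`: product is multiplication mod `p`,
and negation is the identity. -/
noncomputable def hOps (p : ℕ) : MulRingOps (ZMod p) :=
  ⟨hAdd p, (· * ·), id, 0, 1⟩

lemma hAdd_comm (p : ℕ) (a b : ZMod p) : hAdd p a b = hAdd p b a := by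
  unfold hAdd; split_ifs <;> first | rfl | simp_all [Set.pair_comm]

lemma mem_hAdd (p : ℕ) (a b z : ZMod p) :
    z ∈ hAdd p a b ↔
      (if a = 0 then z = b else if b = 0 then z = a else if a = b then True
        else z = a ∨ z = b) := by
  unfold hAdd; split_ifs <;> simp

noncomputable def T3 (p : ℕ) (x y z : ZMod p) : Set (ZMod p) :=
  if x = 0 then hAdd p y z else if y = 0 then hAdd p x z else if z = 0 then hAdd p x y
  else if (x = y ∨ y = z ∨ x = z) then Set.univ else {x, y, z}

lemma iUnion_hAdd_univ (p : ℕ) (x : ZMod p) : (⋃ w, hAdd p x w) = Set.univ := by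
  ext u; simp only [Set.mem_iUnion, Set.mem_univ, iff_true]
  by_cases hx : x = 0
  · exact ⟨u, by simp [hAdd, hx]⟩
  · exact ⟨x, by simp [hAdd, hx]⟩

lemma union_hAdd (p : ℕ) (x y z : ZMod p) :
    (⋃ w ∈ hAdd p y z, hAdd p x w) = T3 p x y z := by
  unfold T3
  by_cases hy : y = 0
  · subst hy
    simp only [hAdd, if_pos rfl, Set.biUnion_singleton]
    split_ifs <;> simp_all [hAdd]
  · by_cases hz : z = 0
    · subst hz
      rw [hAdd_comm]
      simp only [hAdd, if_pos rfl, Set.biUnion_singleton]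
      split_ifs <;> simp_all [hAdd]
    · by_cases hyz : y = z
      · subst hyz
        rw [show hAdd p y y = Set.univ from by simp [hAdd, hy]]
        rw [Set.biUnion_univ, iUnion_hAdd_univ]
        split_ifs <;> simp_all
      · rw [show hAdd p y z = {y, z} from by simp [hAdd, hy, hz, hyz]]
        rw [Set.biUnion_pair]
        by_cases hx : x = 0
        · simp [hAdd, hx, hy, hz, hyz, Set.pair_comm]
        · by_cases hxy : x = y
          · subst hxy
            rw [show hAdd p x x = Set.univ from by simp [hAdd, hx]]
            simp [hx, hy, hz]
          · by_cases hxz : x = z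
            · subst hxz
              rw [show hAdd p x x = Set.univ from by simp [hAdd, hx]]
              simp [hx, hy, hz]
            · rw [show hAdd p x y = {x, y} from by simp [hAdd, hx, hy, hxy],
                show hAdd p x z = {x, z} from by simp [hAdd, hx, hz, hxz]]
              rw [if_neg hx, if_neg hy, if_neg hz, if_neg (by tauto)]
              ext u; simp; tauto

lemma T3_symm (p : ℕ) (x y z : ZMod p) : T3 p x y z = T3 p z x y := by
  unfold T3
  split_ifs <;> simp_all [hAdd_comm] <;>
    first
      | tauto
      | (ext u; simp; tauto)

/-- for a prime `p`, `H_p` is a hyperfield in which `-a = a` for all `a`. -/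
theorem hp_isHyperfield (p : ℕ) (hp : p.Prime) :
    (hOps p).IsHyperfield ∧ ∀ a : ZMod p, (hOps p).neg a = a := by
  haveI := Fact.mk hp
  refine ⟨⟨⟨?_, ?_, ?_, ?_, ?_, ?_, ?_, ?_, ?_, ?_, ?_⟩, ?_, ?_⟩, fun a => rfl⟩
  · -- add_nonempty
    intro a b
    show (hAdd p a b).Nonempty
    unfold hAdd; split_ifs <;> simp
  · -- add_comm
    exact hAdd_comm p
  · -- rev_left
    intro x y z h
    replace h : z ∈ hAdd p x y := h
    show x ∈ hAdd p z y
    rw [mem_hAdd] at h ⊢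
    split_ifs at h ⊢ <;> simp_all <;> tauto
  · -- rev_right
    intro x y z h
    replace h : z ∈ hAdd p x y := h
    show y ∈ hAdd p x z
    rw [mem_hAdd] at h ⊢
    split_ifs at h ⊢ <;> simp_all <;> tauto
  · -- zero_add
    intro x y
    show y ∈ hAdd p 0 x ↔ x = y
    simp [hAdd, eq_comm]
  · -- add_assoc
    intro x y z
    show (⋃ w ∈ hAdd p y z, hAdd p x w) = ⋃ t ∈ hAdd p x y, hAdd p t z
    have h2 : (⋃ t ∈ hAdd p x y, hAdd p t z) = ⋃ t ∈ hAdd p x y, hAdd p z t := by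
      exact Set.iUnion_congr fun t => Set.iUnion_congr fun _ => hAdd_comm p t z
    rw [union_hAdd, h2, union_hAdd]
    exact T3_symm p x y z
  · exact fun a b => mul_comm a b
  · exact fun a b c => mul_assoc a b c
  · exact fun a => one_mul a
  · exact fun a => mul_zero a
  · -- distrib
    intro a b c d h
    replace h : c ∈ hAdd p a b := h
    show c * d ∈ hAdd p (a * d) (b * d)
    by_cases hd : d = 0
    · subst hd; simp [hAdd]
    · have h0 : ∀ x : ZMod p, x * d = 0 ↔ x = 0 := fun x => by simp [mul_eq_zero, hd]
      have hc : ∀ x y : ZMod p, x * d = y * d ↔ x = y :=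
        fun x y => ⟨fun h => mul_right_cancel₀ hd h, fun h => by rw [h]⟩
      rw [mem_hAdd] at h ⊢
      simp only [h0, hc]
      exact h
  · -- zero_ne_one
    exact zero_ne_one
  · -- exists_inv
    exact fun a ha => ⟨a⁻¹, mul_inv_cancel₀ ha⟩
end

section
/- The hyperfield F₁ ×ₕ F₂ of two hyperbolic hyperfields, together with the coordinate projections, satisfies the universal property of the categorical product in the category of hyperbolic hyperfields with multiring morphisms: for any hyperbolic hyperfield F with morphisms p₁ : F → F₁ and p₂ : F → F₂ there is a unique morphism (p₁,p₂) : F → F₁ ×ₕ F₂ commuting with the projections. -/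
namespace MulRingOps

variable {A B : Type*}

lemma IsMulRing.neg_zero' {S : MulRingOps A} (h : S.IsMulRing) : S.neg S.zero = S.zero := by
  have h0 : S.zero ∈ S.add S.zero S.zero := (h.zero_add _ _).mpr rfl
  have h1 := h.rev_right h0
  rw [h.add_comm] at h1
  exact (h.zero_add _ _).mp h1

lemma IsMulRing.neg_neg' {S : MulRingOps A} (h : S.IsMulRing) (a : A) :
    S.neg (S.neg a) = a := by
  have h0 : a ∈ S.add S.zero a := (h.zero_add _ _).mpr rfl
  have h1 : S.zero ∈ S.add a (S.neg a) := h.rev_left h0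
  have h2 : a ∈ S.add S.zero (S.neg (S.neg a)) := h.rev_left h1
  exact (h.zero_add _ _).mp h2

lemma IsMulRing.neg_ne_zero' {S : MulRingOps A} (h : S.IsMulRing) {a : A}
    (ha : a ≠ S.zero) : S.neg a ≠ S.zero := by
  intro hcon
  apply ha
  rw [← h.neg_neg' a, hcon, h.neg_zero']

lemma IsHyperfield.mul_ne_zero' {S : MulRingOps A} (h : S.IsHyperfield) {a b : A}
    (ha : a ≠ S.zero) (hb : b ≠ S.zero) : S.mul a b ≠ S.zero := by
  intro hcon
  obtain ⟨a', ha'⟩ := h.exists_inv a ha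
  apply hb
  calc b = S.mul S.one b := (h.one_mul b).symm
    _ = S.mul (S.mul a a') b := by rw [ha']
    _ = S.mul (S.mul a' a) b := by rw [h.mul_comm a a']
    _ = S.mul a' (S.mul a b) := h.mul_assoc _ _ _
    _ = S.zero := by rw [hcon, h.mul_zero]

/-- The carrier `F₁ ×ₕ F₂ = (Ḟ₁ × Ḟ₂) ∪ {(0,0)}`, with `none` playing the role of `(0,0)`. -/
abbrev PCar (S : MulRingOps A) (T : MulRingOps B) :=
  Option ({a : A // a ≠ S.zero} × {b : B // b ≠ T.zero})

/-- First coordinate of an element of `F₁ ×ₕ F₂`. -/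
def pFst (S : MulRingOps A) (T : MulRingOps B) : PCar S T → A
  | none => S.zero
  | some p => p.1.1

/-- Second coordinate of an element of `F₁ ×ₕ F₂`. -/
def pSnd (S : MulRingOps A) (T : MulRingOps B) : PCar S T → B
  | none => T.zero
  | some p => p.2.1

/-- The multivalued sum on `F₁ ×ₕ F₂`:
`(a,b)+(c,d) = {(e,f) ∈ F₁ ×ₕ F₂ : e ∈ a+c and f ∈ b+d}`. -/
def prodAdd (S : MulRingOps A) (T : MulRingOps B) (x y : PCar S T) : Set (PCar S T) :=
  {z | pFst S T z ∈ S.add (pFst S T x) (pFst S T y) ∧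
       pSnd S T z ∈ T.add (pSnd S T x) (pSnd S T y)}

/-- The hyperfield operations on `F₁ ×ₕ F₂`: componentwise product and negation,
and the multivalued sum `prodAdd`. -/
def prodOps {S : MulRingOps A} {T : MulRingOps B}
    (hS : S.IsHyperfield) (hT : T.IsHyperfield) : MulRingOps (PCar S T) where
  add := prodAdd S T
  mul x y :=
    match x, y with
    | some p, some q =>
        some (⟨S.mul p.1.1 q.1.1, hS.mul_ne_zero' p.1.2 q.1.2⟩,
              ⟨T.mul p.2.1 q.2.1, hT.mul_ne_zero' p.2.2 q.2.2⟩)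
    | _, _ => none
  neg := Option.map fun p =>
    (⟨S.neg p.1.1, hS.toIsMulRing.neg_ne_zero' p.1.2⟩,
     ⟨T.neg p.2.1, hT.toIsMulRing.neg_ne_zero' p.2.2⟩)
  zero := none
  one := some (⟨S.one, Ne.symm hS.zero_ne_one⟩, ⟨T.one, Ne.symm hT.zero_ne_one⟩)

end MulRingOps

namespace MulRingOps

lemma IsMulRing.zero_mul' {S : MulRingOps A} (h : S.IsMulRing) (a : A) :
    S.mul S.zero a = S.zero := by rw [h.mul_comm, h.mul_zero]

lemma hom_ne_zero {C A : Type*} {U : MulRingOps C} {S : MulRingOps A}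
    (hU : U.IsHyperfield) (hS : S.IsHyperfield) {f : C → A} (hf : IsHom U S f)
    {c : C} (hc : c ≠ U.zero) : f c ≠ S.zero := by
  obtain ⟨d, hd⟩ := hU.exists_inv c hc
  intro h0
  have h1 : f (U.mul c d) = S.mul (f c) (f d) := hf.2.2.2.1 c d
  rw [hd, hf.2.2.2.2, h0, hS.toIsMulRing.zero_mul'] at h1
  exact hS.zero_ne_one h1.symm

end MulRingOps

open MulRingOps in
/-- `F₁ ×ₕ F₂`, together with the coordinate projections, is the categorical
product of the hyperbolic hyperfields `F₁` and `F₂` in the category of hyperbolic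
hyperfields with multiring morphisms. -/
theorem prod_universalProperty {A B C : Type*} {S : MulRingOps A} {T : MulRingOps B}
    (hS : S.IsHyperfield) (hT : T.IsHyperfield)
    (hSh : IsHyperbolic S) (hTh : IsHyperbolic T)
    (U : MulRingOps C) (hU : U.IsHyperfield) (hUh : IsHyperbolic U)
    (p₁ : C → A) (p₂ : C → B) (hp₁ : IsHom U S p₁) (hp₂ : IsHom U T p₂) :
    IsHom (prodOps hS hT) S (pFst S T) ∧ IsHom (prodOps hS hT) T (pSnd S T) ∧
    ∃! g : C → PCar S T,
      IsHom U (prodOps hS hT) g ∧ pFst S T ∘ g = p₁ ∧ pSnd S T ∘ g = p₂ := by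
  classical
  have hSr := hS.toIsMulRing
  have hTr := hT.toIsMulRing
  refine ⟨?_, ?_, ?_⟩
  · refine ⟨fun hc => hc.1, ?_, rfl, ?_, rfl⟩
    · intro a; cases a with
      | none => exact (hSr.neg_zero').symm
      | some p => rfl
    · intro a b; cases a with
      | none => cases b <;> exact (hSr.zero_mul' _).symm
      | some p => cases b with
        | none => exact (hSr.mul_zero _).symm
        | some q => rfl
  · refine ⟨fun hc => hc.2, ?_, rfl, ?_, rfl⟩
    · intro a; cases a with
      | none => exact (hTr.neg_zero').symm
      | some p => rfl
    · intro a b; cases a with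
      | none => cases b <;> exact (hTr.zero_mul' _).symm
      | some p => cases b with
        | none => exact (hTr.mul_zero _).symm
        | some q => rfl
  · set g : C → PCar S T := fun c =>
      if h : c = U.zero then none
      else some (⟨p₁ c, hom_ne_zero hU hS hp₁ h⟩, ⟨p₂ c, hom_ne_zero hU hT hp₂ h⟩)
      with hg
    have hfst : ∀ c, pFst S T (g c) = p₁ c := by
      intro c
      by_cases h : c = U.zero
      · simp [hg, h, pFst, hp₁.2.2.1]
      · simp [hg, h, pFst]
    have hsnd : ∀ c, pSnd S T (g c) = p₂ c := by
      intro c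
      by_cases h : c = U.zero
      · simp [hg, h, pSnd, hp₂.2.2.1]
      · simp [hg, h, pSnd]
    refine ⟨g, ⟨⟨?_, ?_, ?_, ?_, ?_⟩, funext hfst, funext hsnd⟩, ?_⟩
    · intro a b c hc
      exact ⟨by rw [hfst, hfst, hfst]; exact hp₁.1 hc,
             by rw [hsnd, hsnd, hsnd]; exact hp₂.1 hc⟩
    · intro a
      by_cases h : a = U.zero
      · have : U.neg a = U.zero := by rw [h, hU.toIsMulRing.neg_zero']
        simp [hg, h, this, prodOps, hU.toIsMulRing.neg_zero']
      · have h' : U.neg a ≠ U.zero := hU.toIsMulRing.neg_ne_zero' h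
        simp only [hg, dif_neg h, dif_neg h', prodOps, Option.map_some]
        congr 1
        ext <;> simp [hp₁.2.1, hp₂.2.1]
    · simp [hg, prodOps]
    · intro a b
      by_cases ha : a = U.zero
      · have : U.mul a b = U.zero := by rw [ha, hU.toIsMulRing.zero_mul']
        simp [hg, ha, this, prodOps, hU.toIsMulRing.zero_mul']
      · by_cases hb : b = U.zero
        · have : U.mul a b = U.zero := by rw [hb, hU.toIsMulRing.mul_zero]
          simp [hg, hb, this, prodOps, hU.toIsMulRing.mul_zero]
        · have hab : U.mul a b ≠ U.zero := hU.mul_ne_zero' ha hb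
          simp only [hg, dif_neg ha, dif_neg hb, dif_neg hab, prodOps]
          congr 1
          ext <;> simp [hp₁.2.2.2.1, hp₂.2.2.2.1]
    · have h1 : U.one ≠ U.zero := Ne.symm hU.zero_ne_one
      simp only [hg, dif_neg h1, prodOps]
      congr 1
      ext <;> simp [hp₁.2.2.2.2, hp₂.2.2.2.2]
    · rintro g' ⟨hg', hf1, hf2⟩
      funext c
      have e1 : pFst S T (g' c) = p₁ c := congrFun hf1 c
      have e2 : pSnd S T (g' c) = p₂ c := congrFun hf2 c
      rcases h : g' c with _ | p
      · rw [h] at e1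
        have hc : c = U.zero := by
          by_contra hc
          exact hom_ne_zero hU hS hp₁ hc e1.symm
        simp [hg, hc]
      · rw [h] at e1 e2
        have hc : c ≠ U.zero := by
          intro hc
          apply p.1.2
          have e1' : p.1.1 = p₁ c := e1
          rw [e1', hc, hp₁.2.2.1]
        simp only [hg, dif_neg hc]
        congr 1
        ext
        · exact e1
        · exact e2
end
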